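/- arXiv:1202.5908 — 2 statements merged into one kernel-verified Lean document; each statement's English description precedes it below -/
import Mathlib

section
/- Let τ = [x_{i−1},x_i]×[y_{j−1},y_j] be an axis-parallel rectangle with side lengths h_x = x_i − x_{i−1}, h_y = y_j − y_{j−1} and center (x_τ, y_τ) = ((x_{i−1}+x_i)/2, (y_{j−1}+y_j)/2). Let g ∈ C³(τ), let g^I be the bilinear interpolant of g on τ, and let w be any bilinear function on τ. Then ∫_τ (g − g^I)_y w_y dx dy = ∫_τ g_{xxy} F_τ(x) ( w_y − (2/3)(x − x_τ) w_{xy} ) dx dy, where F_τ(x) = ((x − x_τ)² − h_x²/4)/2. -/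
open MeasureTheory Real Set

noncomputable section

/-- First-order partial derivative in the x-direction. -/
def pdx (f : ℝ × ℝ → ℝ) : ℝ × ℝ → ℝ := fun p => fderiv ℝ f p (1, 0)

/-- First-order partial derivative in the y-direction. -/
def pdy (f : ℝ × ℝ → ℝ) : ℝ × ℝ → ℝ := fun p => fderiv ℝ f p (0, 1)

/-- Mixed partial derivative `∂_x^i ∂_y^j`. -/
def pd (i j : ℕ) (f : ℝ × ℝ → ℝ) : ℝ × ℝ → ℝ := pdx^[i] (pdy^[j] f)

/-- A function is globally a bilinear polynomial `a + bx + cy + dxy`. -/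
def IsBilinear (f : ℝ × ℝ → ℝ) : Prop :=
  ∃ a b c d : ℝ, ∀ p : ℝ × ℝ, f p = a + b * p.1 + c * p.2 + d * (p.1 * p.2)

/-! Write `e = g - g^I` and `w_y = c + d x`. Since `w_y` does not depend on `y`, integrating
in `y` first turns the left side into `∫ (c + d x) D(x) dx` with `D(x) = e(x, y₁) - e(x, y₀)`,
and, after commuting `∂_y` past `∂_x²`, the right side into `∫ P(x) D''(x) dx` with
`P = F_τ (c + d x - (2/3)(x - x_τ) d)`; here `D''` only sees `g`, because
`g^I(x, y₁) - g^I(x, y₀)` is affine in `x`. Interpolation gives `D(x₀) = D(x₁) = 0`, and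
`F_τ(x) = (x - x₀)(x - x₁)/2` gives `P(x₀) = P(x₁) = 0`; since `P'' = c + d x`, two
integrations by parts conclude. -/

section PartialDerivatives

variable {f : ℝ × ℝ → ℝ}

theorem hasDerivAt_pdx {x y : ℝ} (hf : DifferentiableAt ℝ f (x, y)) :
    HasDerivAt (fun t => f (t, y)) (pdx f (x, y)) x :=
  hf.hasFDerivAt.comp_hasDerivAt x ((hasDerivAt_id x).prodMk (hasDerivAt_const x y))

theorem hasDerivAt_pdy {x y : ℝ} (hf : DifferentiableAt ℝ f (x, y)) :
    HasDerivAt (fun t => f (x, t)) (pdy f (x, y)) y :=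
  hf.hasFDerivAt.comp_hasDerivAt y ((hasDerivAt_const y x).prodMk (hasDerivAt_id y))

theorem hasDerivAt_pdx_sub (hf : Differentiable ℝ f) (x y0 y1 : ℝ) :
    HasDerivAt (fun t => f (t, y1) - f (t, y0)) (pdx f (x, y1) - pdx f (x, y0)) x :=
  (hasDerivAt_pdx (hf _)).sub (hasDerivAt_pdx (hf _))

theorem contDiff_pdx {m n : WithTop ℕ∞} (hf : ContDiff ℝ n f) (hmn : m + 1 ≤ n) :
    ContDiff ℝ m (pdx f) :=
  (hf.fderiv_right hmn).clm_apply contDiff_const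

theorem contDiff_pdy {m n : WithTop ℕ∞} (hf : ContDiff ℝ n f) (hmn : m + 1 ≤ n) :
    ContDiff ℝ m (pdy f) :=
  (hf.fderiv_right hmn).clm_apply contDiff_const

theorem pdx_pdy_comm (hf : ContDiff ℝ 2 f) : pdx (pdy f) = pdy (pdx f) := by
  ext p
  have hd : DifferentiableAt ℝ (fderiv ℝ f) p :=
    ((hf.fderiv_right (m := 1) le_rfl).differentiable one_ne_zero).differentiableAt
  have hsymm : IsSymmSndFDerivAt ℝ f p := hf.contDiffAt.isSymmSndFDerivAt (by simp)
  change fderiv ℝ (fun q => fderiv ℝ f q (0, 1)) p (1, 0)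
    = fderiv ℝ (fun q => fderiv ℝ f q (1, 0)) p (0, 1)
  rw [fderiv_clm_apply hd (differentiableAt_const _),
    fderiv_clm_apply hd (differentiableAt_const _)]
  simpa using hsymm (1, 0) (0, 1)

theorem pd_two_one_eq_pdy (hf : ContDiff ℝ 3 f) : pd 2 1 f = pdy (pdx (pdx f)) := by
  have h2 : ContDiff ℝ 2 f := hf.of_le (by norm_num)
  have hx : ContDiff ℝ 2 (pdx f) := contDiff_pdx hf (by norm_num)
  simp only [pd, Function.iterate_succ, Function.iterate_zero, Function.comp_apply, id]
  rw [pdx_pdy_comm h2, pdx_pdy_comm hx]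

end PartialDerivatives

namespace IsBilinear

variable {f : ℝ × ℝ → ℝ}

theorem contDiff (hf : IsBilinear f) {n : WithTop ℕ∞} : ContDiff ℝ n f := by
  obtain ⟨a, b, c, d, hf⟩ := hf
  rw [funext hf]
  fun_prop

theorem exists_pdy_eq (hf : IsBilinear f) :
    ∃ c d : ℝ, (∀ p, pdy f p = c + d * p.1) ∧ ∀ p, pd 1 1 f p = d := by
  have hdiff : Differentiable ℝ f := hf.contDiff.differentiable one_ne_zero
  obtain ⟨a, b, c, d, hf⟩ := hf
  have hy : ∀ p, pdy f p = c + d * p.1 := by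
    rintro ⟨x, y⟩
    refine (hasDerivAt_pdy (hdiff _)).unique ?_
    simp only [hf]
    exact ((((hasDerivAt_id y).const_mul c).const_add _).add
      (((hasDerivAt_id y).const_mul x).const_mul d)).congr_deriv (by simp)
  refine ⟨c, d, hy, ?_⟩
  rintro ⟨x, y⟩
  have hyfun : pdy f = fun p => c + d * p.1 := funext hy
  change pdx (pdy f) (x, y) = d
  rw [hyfun]
  refine (hasDerivAt_pdx (by fun_prop)).unique ?_
  simpa using ((hasDerivAt_id x).const_mul d).const_add c

theorem exists_sub_eq_affine (hf : IsBilinear f) (y0 y1 : ℝ) :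
    ∃ α β : ℝ, ∀ x, f (x, y1) - f (x, y0) = α + β * x := by
  obtain ⟨a, b, c, d, hf⟩ := hf
  exact ⟨c * (y1 - y0), d * (y1 - y0), fun x => by simp only [hf]; ring⟩

end IsBilinear

theorem setIntegral_Icc_prod_Icc_eq_intervalIntegral {x0 x1 y0 y1 : ℝ}
    (hx : x0 ≤ x1) (hy : y0 ≤ y1) {F : ℝ × ℝ → ℝ}
    (hF : IntegrableOn F (Icc x0 x1 ×ˢ Icc y0 y1)) :
    ∫ p in Icc x0 x1 ×ˢ Icc y0 y1, F p = ∫ x in x0..x1, ∫ y in y0..y1, F (x, y) := by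
  rw [Measure.volume_eq_prod] at hF ⊢
  simp only [setIntegral_prod F hF, intervalIntegral.integral_of_le hx,
    intervalIntegral.integral_of_le hy, integral_Icc_eq_integral_Ioc]

theorem setIntegral_pdy_mul_eq {x0 x1 y0 y1 : ℝ} (hx : x0 ≤ x1) (hy : y0 ≤ y1)
    {f : ℝ × ℝ → ℝ} {u : ℝ → ℝ} (hf : ContDiff ℝ 1 f) (hu : Continuous u) :
    ∫ p in Icc x0 x1 ×ˢ Icc y0 y1, pdy f p * u p.1
      = ∫ x in x0..x1, u x * (f (x, y1) - f (x, y0)) := by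
  have hfy : Continuous (pdy f) := (contDiff_pdy (m := 0) hf (by simp)).continuous
  rw [setIntegral_Icc_prod_Icc_eq_intervalIntegral hx hy
    ((by fun_prop : Continuous fun p => pdy f p * u p.1).continuousOn.integrableOn_compact
      (isCompact_Icc.prod isCompact_Icc))]
  refine intervalIntegral.integral_congr fun x _ => ?_
  simp only [intervalIntegral.integral_mul_const, mul_comm (u x)]
  congr 1
  refine intervalIntegral.integral_eq_sub_of_hasDerivAt
    (fun y _ => hasDerivAt_pdy ((hf.differentiable one_ne_zero) _)) ?_
  exact (by fun_prop : Continuous fun y => pdy f (x, y)).intervalIntegrable _ _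

theorem integral_mul_deriv_deriv_eq_deriv_deriv_mul {a b : ℝ} {u u' u'' v v' v'' : ℝ → ℝ}
    (hu : ∀ x ∈ uIcc a b, HasDerivAt u (u' x) x) (hu' : ∀ x ∈ uIcc a b, HasDerivAt u' (u'' x) x)
    (hv : ∀ x ∈ uIcc a b, HasDerivAt v (v' x) x) (hv' : ∀ x ∈ uIcc a b, HasDerivAt v' (v'' x) x)
    (hu'' : ContinuousOn u'' (uIcc a b)) (hv'' : ContinuousOn v'' (uIcc a b))
    (hua : u a = 0) (hub : u b = 0) (hva : v a = 0) (hvb : v b = 0) :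
    ∫ x in a..b, u x * v'' x = ∫ x in a..b, u'' x * v x := by
  have huv'' : IntervalIntegrable (fun x => u x * v'' x) volume a b :=
    ((HasDerivAt.continuousOn hu).mul hv'').intervalIntegrable
  have hu''v : IntervalIntegrable (fun x => u'' x * v x) volume a b :=
    (hu''.mul (HasDerivAt.continuousOn hv)).intervalIntegrable
  have hwronskian : ∫ x in a..b, (u x * v'' x - u'' x * v x)
      = (u b * v' b - u' b * v b) - (u a * v' a - u' a * v a) :=
    intervalIntegral.integral_eq_sub_of_hasDerivAt
      (fun x hx => (((hu x hx).mul (hv' x hx)).sub ((hu' x hx).mul (hv x hx))).congr_deriv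
        (by ring))
      (huv''.sub hu''v)
  rw [intervalIntegral.integral_sub huv'' hu''v, hua, hub, hva, hvb] at hwronskian
  linarith

theorem integral_affine_mul_eq {a b c d : ℝ} {v v' v'' : ℝ → ℝ}
    (hv : ∀ x ∈ uIcc a b, HasDerivAt v (v' x) x) (hv' : ∀ x ∈ uIcc a b, HasDerivAt v' (v'' x) x)
    (hv'' : ContinuousOn v'' (uIcc a b)) (hva : v a = 0) (hvb : v b = 0) :
    ∫ x in a..b, (c + d * x) * v x
      = ∫ x in a..b, (((x - (a + b) / 2) ^ 2 - (b - a) ^ 2 / 4) / 2 *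
          (c + d * x - 2 / 3 * (x - (a + b) / 2) * d)) * v'' x := by
  set m := (a + b) / 2
  set F : ℝ → ℝ := fun x => ((x - m) ^ 2 - (b - a) ^ 2 / 4) / 2
  set W : ℝ → ℝ := fun x => c + d * x - 2 / 3 * (x - m) * d
  have hs (x : ℝ) : HasDerivAt (fun x => x - m) 1 x := (hasDerivAt_id' x).sub_const m
  have hF (x : ℝ) : HasDerivAt F (x - m) x :=
    ((((hs x).pow 2).sub_const ((b - a) ^ 2 / 4)).div_const 2).congr_deriv (by ring)
  have hW (x : ℝ) : HasDerivAt W (d / 3) x :=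
    ((((hasDerivAt_id' x).const_mul d).const_add c).sub
      (((hs x).const_mul (2 / 3)).mul_const d)).congr_deriv (by ring)
  have hP (x : ℝ) : HasDerivAt (fun x => F x * W x) ((x - m) * W x + F x * (d / 3)) x :=
    (hF x).mul (hW x)
  have hP' (x : ℝ) : HasDerivAt (fun x => (x - m) * W x + F x * (d / 3)) (c + d * x) x :=
    (((hs x).mul (hW x)).add ((hF x).mul_const (d / 3))).congr_deriv (by simp only [W]; ring)
  have hFa : F a = 0 := by simp only [F, m]; ring
  have hFb : F b = 0 := by simp only [F, m]; ring
  exact (integral_mul_deriv_deriv_eq_deriv_deriv_mul (fun x _ => hP x) (fun x _ => hP' x) hv hv'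
    (by fun_prop) hv'' (by simp [hFa]) (by simp [hFb]) hva hvb).symm

/-- Lin identity (b): for `g ∈ C³(τ)` with bilinear interpolant `g^I` on the rectangle
`τ = [x₀,x₁]×[y₀,y₁]` and any bilinear `w`,
`∫_τ (g−g^I)_y w_y = ∫_τ g_{xxy} F_τ(x) (w_y − (2/3)(x−x_τ) w_{xy})`,
where `F_τ(x) = ((x−x_τ)² − h_x²/4)/2`. -/
theorem lin_identity_b (x0 x1 y0 y1 : ℝ) (hx : x0 < x1) (hy : y0 < y1)
    (g gI w : ℝ × ℝ → ℝ) (hg : ContDiff ℝ 3 g)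
    (hgIbil : IsBilinear gI)
    (h00 : gI (x0, y0) = g (x0, y0)) (h10 : gI (x1, y0) = g (x1, y0))
    (h01 : gI (x0, y1) = g (x0, y1)) (h11 : gI (x1, y1) = g (x1, y1))
    (hwbil : IsBilinear w) :
    ∫ p in Icc x0 x1 ×ˢ Icc y0 y1, pdy (fun q => g q - gI q) p * pdy w p
      = ∫ p in Icc x0 x1 ×ˢ Icc y0 y1,
          pd 2 1 g p * (((p.1 - (x0 + x1) / 2) ^ 2 - (x1 - x0) ^ 2 / 4) / 2) *
            (pdy w p - 2 / 3 * (p.1 - (x0 + x1) / 2) * pd 1 1 w p) := by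
  obtain ⟨c, d, hwy, hwxy⟩ := hwbil.exists_pdy_eq
  obtain ⟨α, β, hgI⟩ := hgIbil.exists_sub_eq_affine y0 y1
  have hgx : ContDiff ℝ 2 (pdx g) := contDiff_pdx hg (by norm_num)
  have hgxx : ContDiff ℝ 1 (pdx (pdx g)) := contDiff_pdx hgx (by norm_num)
  have hv (x : ℝ) : HasDerivAt (fun x => g (x, y1) - g (x, y0) - (α + β * x))
      (pdx g (x, y1) - pdx g (x, y0) - β) x :=
    ((hasDerivAt_pdx_sub (hg.differentiable (by norm_num)) x y0 y1).sub
      (((hasDerivAt_id' x).const_mul β).const_add α)).congr_deriv (by ring)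
  have hv' (x : ℝ) : HasDerivAt (fun x => pdx g (x, y1) - pdx g (x, y0) - β)
      (pdx (pdx g) (x, y1) - pdx (pdx g) (x, y0)) x :=
    (hasDerivAt_pdx_sub (hgx.differentiable (by norm_num)) x y0 y1).sub_const β
  calc _ = ∫ x in x0..x1, (c + d * x) * (g (x, y1) - g (x, y0) - (α + β * x)) := by
        simp only [hwy]
        refine (setIntegral_pdy_mul_eq hx.le hy.le
          ((hg.of_le (by norm_num)).sub hgIbil.contDiff) (u := fun x => c + d * x)
          (by fun_prop)).trans ?_
        refine intervalIntegral.integral_congr fun x _ => ?_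
        simp only [← hgI x]
        ring
    _ = ∫ x in x0..x1, (((x - (x0 + x1) / 2) ^ 2 - (x1 - x0) ^ 2 / 4) / 2 *
          (c + d * x - 2 / 3 * (x - (x0 + x1) / 2) * d)) *
            (pdx (pdx g) (x, y1) - pdx (pdx g) (x, y0)) :=
        integral_affine_mul_eq (fun x _ => hv x) (fun x _ => hv' x)
          (by have := hgxx.continuous; fun_prop)
          (by rw [← hgI x0, h00, h01]; ring) (by rw [← hgI x1, h10, h11]; ring)
    _ = _ := by
        refine (setIntegral_pdy_mul_eq hx.le hy.le hgxx (by fun_prop)).symm.trans ?_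
        simp only [pd_two_one_eq_pdy hg, hwy, hwxy, mul_assoc]
end
end

section
/- There exists a constant C, independent of ε and N, such that ‖E − E^I‖_{L^∞(Ω_s)} ≤ C N^{-5/2} for each E ∈ {E_1, E_2, E_12}, and ‖E_1 − E_1^I‖_{L^∞(Ω_2)} ≤ C N^{-5/2}. -/
/-!
Away from its own layer, each of `E₁, E₂, E₁₂` is already of size `O(N^{-5/2})`: the
transition points `λ_x = ρ ε β⁻¹ ln N` and `λ_y = ρ √ε ln N` are chosen so that the decay
factors there are at most `N^{-ρ}`. The regions `Ω_s` and `Ω_s ∪ Ω_2` are unions of mesh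
rectangles, and on a rectangle the bilinear interpolant is bounded by its nodal values, so
`|E - E^I| ≤ |E| + |E^I| ≤ 2 max |E|`.
-/
open MeasureTheory Real Set

noncomputable section

/-- A function coincides with a bilinear polynomial `a + bx + cy + dxy` on a set. -/
def IsBilinearOn (f : ℝ × ℝ → ℝ) (s : Set (ℝ × ℝ)) : Prop :=
  ∃ a b c d : ℝ, ∀ p ∈ s, f p = a + b * p.1 + c * p.2 + d * (p.1 * p.2)

/-- The Shishkin-mesh node abscissas. -/
def meshX (N : ℕ) (lx : ℝ) (i : ℕ) : ℝ :=
  if i ≤ N / 2 then 2 * (i : ℝ) * (1 - lx) / (N : ℝ)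
  else 1 - 2 * ((N : ℝ) - (i : ℝ)) * lx / (N : ℝ)

/-- The Shishkin-mesh node ordinates. -/
def meshY (N : ℕ) (ly : ℝ) (j : ℕ) : ℝ :=
  if j ≤ N / 3 then 3 * (j : ℝ) * ly / (N : ℝ)
  else if j ≤ 2 * N / 3 then
    (3 * (j : ℝ) / (N : ℝ) - 1) - 3 * (2 * (j : ℝ) - (N : ℝ)) * ly / (N : ℝ)
  else 1 - 3 * ((N : ℝ) - (j : ℝ)) * ly / (N : ℝ)

/-- The mesh rectangle `τ_{ij} = [x_{i-1}, x_i] × [y_{j-1}, y_j]`. -/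
def meshRect (N : ℕ) (lx ly : ℝ) (i j : ℕ) : Set (ℝ × ℝ) :=
  Icc (meshX N lx (i - 1)) (meshX N lx i) ×ˢ Icc (meshY N ly (j - 1)) (meshY N ly j)

def OmegaS (lx ly : ℝ) : Set (ℝ × ℝ) := Icc 0 (1 - lx) ×ˢ Icc ly (1 - ly)
def Omega1R (lx ly : ℝ) : Set (ℝ × ℝ) := Icc (1 - lx) 1 ×ˢ Icc ly (1 - ly)
def Omega2R (lx ly : ℝ) : Set (ℝ × ℝ) := Icc 0 (1 - lx) ×ˢ (Icc 0 ly ∪ Icc (1 - ly) 1)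
def Omega12R (lx ly : ℝ) : Set (ℝ × ℝ) := Icc (1 - lx) 1 ×ˢ (Icc 0 ly ∪ Icc (1 - ly) 1)

/-- Basic assumptions on the Shishkin mesh data (with `ρ = 2.5`). -/
def ShishkinHyp (N : ℕ) (ε β lx ly : ℝ) : Prop :=
  0 < N ∧ 6 ∣ N ∧ 0 < ε ∧ ε ≤ (N : ℝ)⁻¹ ∧ 0 < β ∧
  lx = 2.5 * ε / β * Real.log (N : ℝ) ∧ ly = 2.5 * Real.sqrt ε * Real.log (N : ℝ) ∧
  lx ≤ 1 / 2 ∧ ly ≤ 1 / 4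

/-- `gI` is the piecewise-bilinear nodal interpolant of `g` on the Shishkin mesh. -/
def IsMeshInterpolant (N : ℕ) (lx ly : ℝ) (g gI : ℝ × ℝ → ℝ) : Prop :=
  Continuous gI ∧
  (∀ i j : ℕ, 1 ≤ i → i ≤ N → 1 ≤ j → j ≤ N → IsBilinearOn gI (meshRect N lx ly i j)) ∧
  (∀ i j : ℕ, i ≤ N → j ≤ N →
    gI (meshX N lx i, meshY N ly j) = g (meshX N lx i, meshY N ly j))

def UnitSq : Set (ℝ × ℝ) := Icc 0 1 ×ˢ Icc 0 1

/-- Bounds on the regular part `S` of the solution decomposition. -/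
def BoundS (C0 : ℝ) (S : ℝ × ℝ → ℝ) : Prop :=
  ContDiff ℝ 3 S ∧ ∀ i j : ℕ, i + j ≤ 3 → ∀ p ∈ UnitSq, |pd i j S p| ≤ C0

/-- Bounds on the exponential-layer part `E₁`. -/
def BoundE1 (ε β C0 : ℝ) (E1 : ℝ × ℝ → ℝ) : Prop :=
  ContDiff ℝ 3 E1 ∧ ∀ i j : ℕ, i + j ≤ 3 → ∀ p ∈ UnitSq,
    |pd i j E1 p| ≤ C0 * ε ^ (-(i : ℝ)) * Real.exp (-β * (1 - p.1) / ε)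

/-- Bounds on the characteristic-layer part `E₂`. -/
def BoundE2 (ε C0 : ℝ) (E2 : ℝ × ℝ → ℝ) : Prop :=
  ContDiff ℝ 3 E2 ∧ ∀ i j : ℕ, i + j ≤ 3 → ∀ p ∈ UnitSq,
    |pd i j E2 p| ≤ C0 * ε ^ (-(j : ℝ) / 2) *
      (Real.exp (-p.2 / Real.sqrt ε) + Real.exp (-(1 - p.2) / Real.sqrt ε))

/-- Bounds on the corner-layer part `E₁₂`. -/
def BoundE12 (ε β C0 : ℝ) (E12 : ℝ × ℝ → ℝ) : Prop :=
  ContDiff ℝ 3 E12 ∧ ∀ i j : ℕ, i + j ≤ 3 → ∀ p ∈ UnitSq,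
    |pd i j E12 p| ≤ C0 * ε ^ (-((i : ℝ) + (j : ℝ) / 2)) * Real.exp (-β * (1 - p.1) / ε) *
      (Real.exp (-p.2 / Real.sqrt ε) + Real.exp (-(1 - p.2) / Real.sqrt ε))

/-- Membership in the bilinear finite element space `V^N`. -/
def MemVN (N : ℕ) (lx ly : ℝ) (v : ℝ × ℝ → ℝ) : Prop :=
  Continuous v ∧
  (∀ p ∈ UnitSq, (p.1 = 0 ∨ p.1 = 1 ∨ p.2 = 0 ∨ p.2 = 1) → v p = 0) ∧
  ∀ i j : ℕ, 1 ≤ i → i ≤ N → 1 ≤ j → j ≤ N → IsBilinearOn v (meshRect N lx ly i j)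

/-- The SDFEM stabilization parameter `δ`. -/
def sdDelta (N : ℕ) (lx ly Cstar : ℝ) : ℝ × ℝ → ℝ :=
  (OmegaS lx ly ∪ Omega2R lx ly).indicator fun _ => Cstar / (N : ℝ)

/-- The SDFEM bilinear form `B`. -/
def Bform (N : ℕ) (lx ly ε b c Cstar : ℝ) (v w : ℝ × ℝ → ℝ) : ℝ :=
  ∫ p in UnitSq,
    (ε * (pdx v p * pdx w p + pdy v p * pdy w p)
      + (b * pdx v p + c * v p) * w p
      + (b * pdx v p + c * v p) * (sdDelta N lx ly Cstar p * (b * pdx w p)))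

/-- The square of the SDFEM energy norm `|||·|||`. -/
def energySq (N : ℕ) (lx ly ε b c Cstar : ℝ) (v : ℝ × ℝ → ℝ) : ℝ :=
  ∫ p in UnitSq,
    ((ε + b ^ 2 * sdDelta N lx ly Cstar p) * pdx v p ^ 2
      + ε * pdy v p ^ 2 + c * v p ^ 2)

/-- The neighbourhood `Ω₀` of the point `(xs, ys)`. -/
def OmegaZero (N : ℕ) (xs ys K sx sy : ℝ) : Set (ℝ × ℝ) :=
  {p : ℝ × ℝ | p ∈ Ioo (0 : ℝ) 1 ×ˢ Ioo (0 : ℝ) 1 ∧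
    p.1 - xs ≤ K * sx * Real.log (N : ℝ) ∧ |p.2 - ys| ≤ K * sy * Real.log (N : ℝ)}

/-- `Ω₀'`: the smallest union of mesh rectangles containing `Ω₀`. -/
def OmegaZero' (N : ℕ) (lx ly xs ys K sx sy : ℝ) : Set (ℝ × ℝ) :=
  ⋃ i ∈ Finset.Icc 1 N, ⋃ j ∈ Finset.Icc 1 N,
    ⋃ (_ : volume (OmegaZero N xs ys K sx sy ∩ meshRect N lx ly i j) ≠ 0),
      meshRect N lx ly i j

lemma abs_add_mul_le_of_endpoints {A B u v t M : ℝ} (hu : u ≤ t) (hv : t ≤ v)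
    (hAu : |A + B * u| ≤ M) (hAv : |A + B * v| ≤ M) : |A + B * t| ≤ M := by
  rw [abs_le] at *
  rcases le_total 0 B with hB | hB
  · constructor <;> nlinarith [mul_le_mul_of_nonneg_left hu hB, mul_le_mul_of_nonneg_left hv hB]
  · constructor <;> nlinarith [mul_le_mul_of_nonpos_left hu hB, mul_le_mul_of_nonpos_left hv hB]

/-- A bilinear polynomial is affine in each variable separately. -/
lemma abs_bilinear_le_of_corners {a b c d x₀ x₁ y₀ y₁ x y M : ℝ}
    (hx₀ : x₀ ≤ x) (hx₁ : x ≤ x₁) (hy₀ : y₀ ≤ y) (hy₁ : y ≤ y₁)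
    (h₀₀ : |a + b * x₀ + c * y₀ + d * (x₀ * y₀)| ≤ M)
    (h₁₀ : |a + b * x₁ + c * y₀ + d * (x₁ * y₀)| ≤ M)
    (h₀₁ : |a + b * x₀ + c * y₁ + d * (x₀ * y₁)| ≤ M)
    (h₁₁ : |a + b * x₁ + c * y₁ + d * (x₁ * y₁)| ≤ M) :
    |a + b * x + c * y + d * (x * y)| ≤ M := by
  have edge : ∀ s, |a + b * s + c * y₀ + d * (s * y₀)| ≤ M →
      |a + b * s + c * y₁ + d * (s * y₁)| ≤ M → |(a + c * y) + (b + d * y) * s| ≤ M := by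
    intro s h₀ h₁
    rw [show (a + c * y) + (b + d * y) * s = (a + b * s) + (c + d * s) * y by ring]
    exact abs_add_mul_le_of_endpoints hy₀ hy₁ (by convert h₀ using 2; ring)
      (by convert h₁ using 2; ring)
  rw [show a + b * x + c * y + d * (x * y) = (a + c * y) + (b + d * y) * x by ring]
  exact abs_add_mul_le_of_endpoints hx₀ hx₁ (edge x₀ h₀₀ h₀₁) (edge x₁ h₁₀ h₁₁)

lemma exists_bracket (g : ℕ → ℝ) {m n : ℕ} {t : ℝ} (hmn : m < n) (hm : g m ≤ t)
    (hn : t ≤ g n) : ∃ k, m < k ∧ k ≤ n ∧ g (k - 1) ≤ t ∧ t ≤ g k := by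
  induction n, hmn using Nat.le_induction with
  | base => exact ⟨m + 1, by omega, le_rfl, by simpa using hm, hn⟩
  | succ n hmn ih =>
    by_cases h : t ≤ g n
    · obtain ⟨k, h₁, h₂, h₃, h₄⟩ := ih h
      exact ⟨k, h₁, by omega, h₃, h₄⟩
    · exact ⟨n + 1, by omega, le_rfl, by simpa using (not_le.1 h).le, hn⟩

lemma meshX_zero (N : ℕ) (lx : ℝ) : meshX N lx 0 = 0 := by
  simp [meshX]

lemma meshX_half {N : ℕ} (hN : 0 < N) (h2 : 2 ∣ N) (lx : ℝ) : meshX N lx (N / 2) = 1 - lx := by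
  obtain ⟨m, rfl⟩ := h2
  have hm : (m : ℝ) ≠ 0 := by exact_mod_cast (by omega : m ≠ 0)
  rw [meshX, if_pos le_rfl, Nat.mul_div_cancel_left _ two_pos]
  push_cast
  field_simp

lemma meshX_mapsTo (N : ℕ) {lx : ℝ} (hlx : lx ≤ 1) :
    MapsTo (meshX N lx) (Icc 0 (N / 2)) (Icc 0 (1 - lx)) := by
  rintro i ⟨-, hi⟩
  have hiN : 2 * (i : ℝ) ≤ N := by exact_mod_cast (by omega : 2 * i ≤ N)
  rw [meshX, if_pos hi]
  exact ⟨by have := sub_nonneg.2 hlx; positivity,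
    div_le_of_le_mul₀ (Nat.cast_nonneg _) (by linarith) (by nlinarith)⟩

/- With `N = 3 * k` the truncated divisions `N / 3` and `2 * N / 3` in `meshY` become exact. -/
section meshY

variable {k j : ℕ} {ly : ℝ}

lemma meshY_of_le (hj : j ≤ k) : meshY (3 * k) ly j = j * ly / k := by
  rw [meshY, if_pos (by omega)]
  push_cast
  rw [mul_assoc, mul_div_mul_left _ _ three_ne_zero]

lemma meshY_of_mem_Icc (hk : 0 < k) (hj : j ∈ Icc k (2 * k)) :
    meshY (3 * k) ly j = ly + (j / k - 1) * (1 - 2 * ly) := by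
  have hk' : (k : ℝ) ≠ 0 := by exact_mod_cast hk.ne'
  obtain ⟨hj₁, hj₂⟩ := hj
  obtain rfl | hkj := eq_or_lt_of_le hj₁
  · rw [meshY_of_le le_rfl]
    field_simp
    ring
  · rw [meshY, if_neg (show ¬j ≤ 3 * k / 3 by omega),
      if_pos (show j ≤ 2 * (3 * k) / 3 by omega)]
    push_cast
    field_simp
    ring

lemma meshY_of_ge (hk : 0 < k) (hj : 2 * k ≤ j) :
    meshY (3 * k) ly j = 1 - (3 * k - j) * ly / k := by
  have hk' : (k : ℝ) ≠ 0 := by exact_mod_cast hk.ne'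
  obtain rfl | hkj := eq_or_lt_of_le hj
  · rw [meshY_of_mem_Icc hk ⟨by omega, le_rfl⟩]
    push_cast
    field_simp
    ring
  · rw [meshY, if_neg (show ¬j ≤ 3 * k / 3 by omega),
      if_neg (show ¬j ≤ 2 * (3 * k) / 3 by omega)]
    push_cast
    field_simp

lemma meshY_zero (N : ℕ) (ly : ℝ) : meshY N ly 0 = 0 := by
  simp [meshY]

lemma meshY_self (hk : 0 < k) : meshY (3 * k) ly (3 * k) = 1 := by
  rw [meshY_of_ge hk (by omega)]
  push_cast
  ring

lemma meshY_third (hk : 0 < k) : meshY (3 * k) ly k = ly := by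
  have hk' : (k : ℝ) ≠ 0 := by exact_mod_cast hk.ne'
  rw [meshY_of_le le_rfl]
  field_simp

lemma meshY_two_thirds (hk : 0 < k) : meshY (3 * k) ly (2 * k) = 1 - ly := by
  rw [meshY_of_ge hk le_rfl]
  push_cast
  field_simp
  ring

lemma meshY_mapsTo_low (hly : 0 ≤ ly) : MapsTo (meshY (3 * k) ly) (Icc 0 k) (Icc 0 ly) := by
  rintro j ⟨-, hj⟩
  have hj' : (j : ℝ) ≤ k := by exact_mod_cast hj
  rw [meshY_of_le hj]
  exact ⟨by positivity, div_le_of_le_mul₀ (Nat.cast_nonneg _) hly (by nlinarith)⟩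

lemma meshY_mapsTo_mid (hk : 0 < k) (hly : ly ≤ 1 / 2) :
    MapsTo (meshY (3 * k) ly) (Icc k (2 * k)) (Icc ly (1 - ly)) := by
  intro j hj
  have hk' : (0 : ℝ) < k := by exact_mod_cast hk
  have ht₀ : 0 ≤ (j : ℝ) / k - 1 := by
    rw [sub_nonneg, le_div_iff₀ hk', one_mul]; exact_mod_cast hj.1
  have ht₁ : (j : ℝ) / k - 1 ≤ 1 := by
    have : (j : ℝ) ≤ 2 * k := by exact_mod_cast hj.2
    rw [sub_le_iff_le_add, div_le_iff₀ hk']; linarith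
  rw [meshY_of_mem_Icc hk hj]
  constructor <;> nlinarith

lemma meshY_mapsTo_high (hk : 0 < k) (hly : 0 ≤ ly) :
    MapsTo (meshY (3 * k) ly) (Icc (2 * k) (3 * k)) (Icc (1 - ly) 1) := by
  rintro j ⟨hj₁, hj₂⟩
  have hk' : (0 : ℝ) < k := by exact_mod_cast hk
  have h₁ : 0 ≤ 3 * (k : ℝ) - j := by
    rw [sub_nonneg]; exact_mod_cast hj₂
  have h₂ : 3 * (k : ℝ) - j ≤ k := by
    rw [sub_le_iff_le_add]; exact_mod_cast (by omega : 3 * k ≤ k + j)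
  rw [meshY_of_ge hk hj₁]
  have : (3 * k - j) * ly / k ≤ ly := div_le_of_le_mul₀ hk'.le hly (by nlinarith)
  constructor
  · linarith
  · have : 0 ≤ (3 * k - j) * ly / k := by positivity
    linarith

lemma meshY_mapsTo (hk : 0 < k) (hly₀ : 0 ≤ ly) (hly : ly ≤ 1 / 2) :
    MapsTo (meshY (3 * k) ly) (Icc 0 (3 * k)) (Icc 0 1) := by
  rintro j ⟨-, hj⟩
  rcases le_total j k with hjk | hkj
  · exact Icc_subset_Icc le_rfl (by linarith) (meshY_mapsTo_low hly₀ ⟨j.zero_le, hjk⟩)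
  rcases le_total j (2 * k) with hjk' | hkj'
  · exact Icc_subset_Icc hly₀ (by linarith) (meshY_mapsTo_mid hk hly ⟨hkj, hjk'⟩)
  · exact Icc_subset_Icc (by linarith) le_rfl (meshY_mapsTo_high hk hly₀ ⟨hkj', hj⟩)

end meshY

section interpolant

variable {N : ℕ} {lx ly : ℝ} {g gI : ℝ × ℝ → ℝ}

lemma IsMeshInterpolant.abs_le_of_corners (hI : IsMeshInterpolant N lx ly g gI) {i j : ℕ}
    (hi : 1 ≤ i) (hiN : i ≤ N) (hj : 1 ≤ j) (hjN : j ≤ N) {M : ℝ}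
    (hcorner : ∀ u v, i - 1 ≤ u → u ≤ i → j - 1 ≤ v → v ≤ j →
      |g (meshX N lx u, meshY N ly v)| ≤ M)
    {p : ℝ × ℝ} (hp : p ∈ meshRect N lx ly i j) : |gI p| ≤ M := by
  obtain ⟨-, hbil, hnode⟩ := hI
  obtain ⟨a, b, c, d, hgI⟩ := hbil i j hi hiN hj hjN
  obtain ⟨⟨hx₀, hx₁⟩, hy₀, hy₁⟩ := hp
  have hnodal : ∀ u v, i - 1 ≤ u → u ≤ i → j - 1 ≤ v → v ≤ j →
      (meshX N lx u, meshY N ly v) ∈ meshRect N lx ly i j →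
      |a + b * meshX N lx u + c * meshY N ly v + d * (meshX N lx u * meshY N ly v)| ≤ M := by
    intro u v hu₀ hu₁ hv₀ hv₁ hmem
    rw [← hgI _ hmem, hnode u v (by omega) (by omega)]
    exact hcorner u v hu₀ hu₁ hv₀ hv₁
  rw [hgI p ⟨⟨hx₀, hx₁⟩, hy₀, hy₁⟩]
  refine abs_bilinear_le_of_corners hx₀ hx₁ hy₀ hy₁ ?_ ?_ ?_ ?_
  · exact hnodal _ _ le_rfl (by omega) le_rfl (by omega)
      ⟨⟨le_rfl, hx₀.trans hx₁⟩, le_rfl, hy₀.trans hy₁⟩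
  · exact hnodal _ _ (by omega) le_rfl le_rfl (by omega)
      ⟨⟨hx₀.trans hx₁, le_rfl⟩, le_rfl, hy₀.trans hy₁⟩
  · exact hnodal _ _ le_rfl (by omega) (by omega) le_rfl
      ⟨⟨le_rfl, hx₀.trans hx₁⟩, hy₀.trans hy₁, le_rfl⟩
  · exact hnodal _ _ (by omega) le_rfl (by omega) le_rfl
      ⟨⟨hx₀.trans hx₁, le_rfl⟩, hy₀.trans hy₁, le_rfl⟩

lemma IsMeshInterpolant.abs_sub_le_on_box (hI : IsMeshInterpolant N lx ly g gI)
    {mx nx my ny : ℕ} {a b c d M : ℝ} (hmnx : mx < nx) (hnx : nx ≤ N) (hmny : my < ny)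
    (hny : ny ≤ N) (hmx : meshX N lx mx = a) (hnx' : meshX N lx nx = b)
    (hmy : meshY N ly my = c) (hny' : meshY N ly ny = d)
    (hX : MapsTo (meshX N lx) (Icc mx nx) (Icc a b))
    (hY : MapsTo (meshY N ly) (Icc my ny) (Icc c d))
    (hg : ∀ q ∈ Icc a b ×ˢ Icc c d, |g q| ≤ M) :
    ∀ p ∈ Icc a b ×ˢ Icc c d, |g p - gI p| ≤ 2 * M := by
  rintro p hp
  obtain ⟨⟨hpa, hpb⟩, hpc, hpd⟩ := hp
  obtain ⟨i, hi₀, hi₁, hxi₀, hxi₁⟩ :=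
    exists_bracket (meshX N lx) hmnx (hmx ▸ hpa) (hnx' ▸ hpb)
  obtain ⟨j, hj₀, hj₁, hyj₀, hyj₁⟩ :=
    exists_bracket (meshY N ly) hmny (hmy ▸ hpc) (hny' ▸ hpd)
  have hgIp : |gI p| ≤ M :=
    hI.abs_le_of_corners (by omega) (by omega) (by omega) (by omega)
      (fun u v hu₀ hu₁ hv₀ hv₁ => hg _ ⟨hX ⟨by omega, by omega⟩, hY ⟨by omega, by omega⟩⟩)
      ⟨⟨hxi₀, hxi₁⟩, hyj₀, hyj₁⟩
  calc |g p - gI p| ≤ |g p| + |gI p| := abs_sub _ _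
    _ ≤ 2 * M := by linarith [hg p ⟨⟨hpa, hpb⟩, hpc, hpd⟩]

end interpolant

lemma exp_neg_le_rpow_neg {x σ t : ℝ} (hx : 0 < x) (h : σ * log x ≤ t) :
    exp (-t) ≤ x ^ (-σ) := by
  rw [rpow_def_of_pos hx]
  exact exp_le_exp.2 (by linarith)

/-- `Ω_s ∪ Ω_2` (for `λ_y ≤ 1/2`), the part of the unit square outside the exponential layer. -/
def OmegaS2 (lx : ℝ) : Set (ℝ × ℝ) := Icc 0 (1 - lx) ×ˢ Icc 0 1

namespace ShishkinHyp

variable {N : ℕ} {ε β lx ly : ℝ}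

lemma lx_nonneg (hS : ShishkinHyp N ε β lx ly) : 0 ≤ lx := by
  obtain ⟨hN, -, hε, -, hβ, rfl, -⟩ := hS
  have := log_nonneg (Nat.one_le_cast.2 hN : (1 : ℝ) ≤ N)
  positivity

lemma ly_nonneg (hS : ShishkinHyp N ε β lx ly) : 0 ≤ ly := by
  obtain ⟨hN, -, -, -, -, -, rfl, -⟩ := hS
  have := log_nonneg (Nat.one_le_cast.2 hN : (1 : ℝ) ≤ N)
  positivity

lemma exp_x_le (hS : ShishkinHyp N ε β lx ly) {x : ℝ} (hx : x ≤ 1 - lx) :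
    exp (-β * (1 - x) / ε) ≤ (N : ℝ) ^ (-(5 / 2 : ℝ)) := by
  obtain ⟨hN, -, hε, -, hβ, rfl, -⟩ := hS
  rw [neg_mul, neg_div]
  refine exp_neg_le_rpow_neg (by exact_mod_cast hN) ?_
  rw [le_div_iff₀ hε]
  have := mul_le_mul_of_nonneg_left (le_sub_comm.1 hx) hβ.le
  field_simp at this ⊢
  linarith

lemma exp_y_le (hS : ShishkinHyp N ε β lx ly) {y : ℝ} (hy : ly ≤ y) :
    exp (-y / √ε) ≤ (N : ℝ) ^ (-(5 / 2 : ℝ)) := by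
  obtain ⟨hN, -, hε, -, -, -, rfl, -⟩ := hS
  rw [neg_div]
  refine exp_neg_le_rpow_neg (by exact_mod_cast hN) ?_
  rw [le_div_iff₀ (sqrt_pos.2 hε)]
  linarith

lemma OmegaS_subset (hS : ShishkinHyp N ε β lx ly) : OmegaS lx ly ⊆ OmegaS2 lx :=
  prod_mono le_rfl (Icc_subset_Icc hS.ly_nonneg (by linarith [hS.ly_nonneg]))

lemma Omega2R_subset (hS : ShishkinHyp N ε β lx ly) : Omega2R lx ly ⊆ OmegaS2 lx := by
  have hly₀ := hS.ly_nonneg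
  obtain ⟨-, -, -, -, -, -, -, -, hly⟩ := hS
  refine prod_mono le_rfl (union_subset ?_ ?_) <;>
    exact Icc_subset_Icc (by linarith) (by linarith)

variable {g gI : ℝ × ℝ → ℝ} {M : ℝ}

lemma abs_sub_interpolant_le_on_OmegaS2 (hS : ShishkinHyp N ε β lx ly)
    (hI : IsMeshInterpolant N lx ly g gI) (hg : ∀ q ∈ OmegaS2 lx, |g q| ≤ M) :
    ∀ p ∈ OmegaS2 lx, |g p - gI p| ≤ 2 * M := by
  have hly₀ := hS.ly_nonneg
  obtain ⟨hN, h6, -, -, -, -, -, hlx, hly⟩ := hS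
  have h2 : 2 ∣ N := dvd_trans (by norm_num) h6
  obtain ⟨k, rfl⟩ : 3 ∣ N := dvd_trans (by norm_num) h6
  have hk : 0 < k := by omega
  exact hI.abs_sub_le_on_box (by omega) (by omega) (by omega) le_rfl (meshX_zero _ _)
    (meshX_half hN h2 _) (meshY_zero _ _) (meshY_self hk)
    (meshX_mapsTo _ (by linarith)) (meshY_mapsTo hk hly₀ (by linarith)) hg

lemma abs_sub_interpolant_le_on_OmegaS (hS : ShishkinHyp N ε β lx ly)
    (hI : IsMeshInterpolant N lx ly g gI) (hg : ∀ q ∈ OmegaS lx ly, |g q| ≤ M) :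
    ∀ p ∈ OmegaS lx ly, |g p - gI p| ≤ 2 * M := by
  obtain ⟨hN, h6, -, -, -, -, -, hlx, hly⟩ := hS
  have h2 : 2 ∣ N := dvd_trans (by norm_num) h6
  obtain ⟨k, rfl⟩ : 3 ∣ N := dvd_trans (by norm_num) h6
  have hk : 0 < k := by omega
  exact hI.abs_sub_le_on_box (by omega) (by omega) (by omega) (by omega) (meshX_zero _ _)
    (meshX_half hN h2 _) (meshY_third hk) (meshY_two_thirds hk)
    (meshX_mapsTo _ (by linarith)) (meshY_mapsTo_mid hk (by linarith)) hg

end ShishkinHyp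

lemma OmegaS2_subset_unitSq {lx : ℝ} (hlx : 0 ≤ lx) : OmegaS2 lx ⊆ UnitSq :=
  prod_mono (Icc_subset_Icc le_rfl (by linarith)) le_rfl

lemma OmegaS_subset_unitSq {lx ly : ℝ} (hlx : 0 ≤ lx) (hly : 0 ≤ ly) : OmegaS lx ly ⊆ UnitSq :=
  prod_mono (Icc_subset_Icc le_rfl (by linarith)) (Icc_subset_Icc hly (by linarith))

section layerBounds

variable {N : ℕ} {ε β C0 lx ly : ℝ} {E : ℝ × ℝ → ℝ}

lemma BoundE1.abs_le_on_OmegaS2 (hE : BoundE1 ε β C0 E)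
    (hS : ShishkinHyp N ε β lx ly) (hC0 : 0 ≤ C0) :
    ∀ q ∈ OmegaS2 lx, |E q| ≤ C0 * (N : ℝ) ^ (-(5 / 2 : ℝ)) := by
  intro q hq
  have hE0 : |E q| ≤ C0 * exp (-β * (1 - q.1) / ε) := by
    simpa [pd] using hE.2 0 0 (by norm_num) q (OmegaS2_subset_unitSq hS.lx_nonneg hq)
  exact hE0.trans (mul_le_mul_of_nonneg_left (hS.exp_x_le hq.1.2) hC0)

lemma BoundE2.abs_le_on_OmegaS (hE : BoundE2 ε C0 E)
    (hS : ShishkinHyp N ε β lx ly) (hC0 : 0 ≤ C0) :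
    ∀ q ∈ OmegaS lx ly, |E q| ≤ 2 * C0 * (N : ℝ) ^ (-(5 / 2 : ℝ)) := by
  intro q hq
  have hE0 : |E q| ≤ C0 * (exp (-q.2 / √ε) + exp (-(1 - q.2) / √ε)) := by
    simpa [pd] using
      hE.2 0 0 (by norm_num) q (OmegaS_subset_unitSq hS.lx_nonneg hS.ly_nonneg hq)
  have h₀ := hS.exp_y_le hq.2.1
  have h₁ := hS.exp_y_le (le_sub_comm.1 hq.2.2)
  nlinarith

lemma BoundE12.abs_le_on_OmegaS2 (hE : BoundE12 ε β C0 E)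
    (hS : ShishkinHyp N ε β lx ly) (hC0 : 0 ≤ C0) :
    ∀ q ∈ OmegaS2 lx, |E q| ≤ 2 * C0 * (N : ℝ) ^ (-(5 / 2 : ℝ)) := by
  intro q hq
  have hq' := OmegaS2_subset_unitSq hS.lx_nonneg hq
  have hE0 : |E q| ≤ C0 * exp (-β * (1 - q.1) / ε) *
      (exp (-q.2 / √ε) + exp (-(1 - q.2) / √ε)) := by
    simpa [pd] using hE.2 0 0 (by norm_num) q hq'
  have hsε : 0 ≤ √ε := sqrt_nonneg ε
  have h₀ : exp (-q.2 / √ε) ≤ 1 :=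
    exp_le_one_iff.2 (div_nonpos_of_nonpos_of_nonneg (by linarith [hq'.2.1]) hsε)
  have h₁ : exp (-(1 - q.2) / √ε) ≤ 1 :=
    exp_le_one_iff.2 (div_nonpos_of_nonpos_of_nonneg (by linarith [hq'.2.2]) hsε)
  calc |E q| ≤ C0 * exp (-β * (1 - q.1) / ε) * (exp (-q.2 / √ε) + exp (-(1 - q.2) / √ε)) := hE0
    _ ≤ C0 * (N : ℝ) ^ (-(5 / 2 : ℝ)) * 2 := by gcongr; exacts [hS.exp_x_le hq.1.2, by linarith]
    _ = 2 * C0 * (N : ℝ) ^ (-(5 / 2 : ℝ)) := by ring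

end layerBounds

theorem layer_interpolation_Linf_general (β C0 : ℝ) (hC0 : 0 < C0) :
    ∃ C : ℝ, 0 < C ∧
      ∀ (N : ℕ) (ε lx ly : ℝ) (E1 E2 E12 EI1 EI2 EI12 : ℝ × ℝ → ℝ),
        ShishkinHyp N ε β lx ly →
        BoundE1 ε β C0 E1 → BoundE2 ε C0 E2 → BoundE12 ε β C0 E12 →
        IsMeshInterpolant N lx ly E1 EI1 →
        IsMeshInterpolant N lx ly E2 EI2 →
        IsMeshInterpolant N lx ly E12 EI12 →
        (∀ p ∈ OmegaS lx ly, |E1 p - EI1 p| ≤ C * (N : ℝ) ^ (-(5 / 2 : ℝ))) ∧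
        (∀ p ∈ OmegaS lx ly, |E2 p - EI2 p| ≤ C * (N : ℝ) ^ (-(5 / 2 : ℝ))) ∧
        (∀ p ∈ OmegaS lx ly, |E12 p - EI12 p| ≤ C * (N : ℝ) ^ (-(5 / 2 : ℝ))) ∧
        (∀ p ∈ Omega2R lx ly, |E1 p - EI1 p| ≤ C * (N : ℝ) ^ (-(5 / 2 : ℝ))) := by
  refine ⟨4 * C0, by positivity, ?_⟩
  intro N ε lx ly E1 E2 E12 EI1 EI2 EI12 hS hB1 hB2 hB12 hI1 hI2 hI12
  have hR : 0 ≤ C0 * (N : ℝ) ^ (-(5 / 2 : ℝ)) := by positivity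
  have hE1 := hS.abs_sub_interpolant_le_on_OmegaS2 hI1 (hB1.abs_le_on_OmegaS2 hS hC0.le)
  have hE2 := hS.abs_sub_interpolant_le_on_OmegaS hI2 (hB2.abs_le_on_OmegaS hS hC0.le)
  have hE12 := hS.abs_sub_interpolant_le_on_OmegaS2 hI12 (hB12.abs_le_on_OmegaS2 hS hC0.le)
  refine ⟨fun p hp => ?_, fun p hp => ?_, fun p hp => ?_, fun p hp => ?_⟩
  · linarith [hE1 p (hS.OmegaS_subset hp)]
  · linarith [hE2 p hp]
  · linarith [hE12 p (hS.OmegaS_subset hp)]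
  · linarith [hE1 p (hS.Omega2R_subset hp)]

/-- Layer interpolation errors in `L^∞`: `‖E − E^I‖_{L^∞(Ω_s)} ≤ C N^{-5/2}` for each
`E ∈ {E₁, E₂, E₁₂}`, and `‖E₁ − E₁^I‖_{L^∞(Ω₂)} ≤ C N^{-5/2}`. -/
theorem layer_interpolation_Linf (β C0 : ℝ) (hβ : 0 < β) (hC0 : 0 < C0) :
    ∃ C : ℝ, 0 < C ∧
      ∀ (N : ℕ) (ε lx ly : ℝ) (E1 E2 E12 EI1 EI2 EI12 : ℝ × ℝ → ℝ),
        ShishkinHyp N ε β lx ly →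
        BoundE1 ε β C0 E1 → BoundE2 ε C0 E2 → BoundE12 ε β C0 E12 →
        IsMeshInterpolant N lx ly E1 EI1 →
        IsMeshInterpolant N lx ly E2 EI2 →
        IsMeshInterpolant N lx ly E12 EI12 →
        (∀ p ∈ OmegaS lx ly, |E1 p - EI1 p| ≤ C * (N : ℝ) ^ (-(5 / 2 : ℝ))) ∧
        (∀ p ∈ OmegaS lx ly, |E2 p - EI2 p| ≤ C * (N : ℝ) ^ (-(5 / 2 : ℝ))) ∧
        (∀ p ∈ OmegaS lx ly, |E12 p - EI12 p| ≤ C * (N : ℝ) ^ (-(5 / 2 : ℝ))) ∧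
        (∀ p ∈ Omega2R lx ly, |E1 p - EI1 p| ≤ C * (N : ℝ) ^ (-(5 / 2 : ℝ))) :=
  layer_interpolation_Linf_general β C0 hC0
end
end
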